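/- For every integer d ≥ 1 and every (p,u) with p > 0, u ∈ ℝ^d, the entropy variables ω(p,u) are the gradient of the entropy with respect to the conservative variables, expressed in the chain-rule form: the total (Fréchet) derivative of the map (p,u) ↦ η(p,u) at (p,u) equals Σ_{α=1}^{d+1} ω_α(p,u) times the total derivative of the map (p,u) ↦ W_α(p,u) at (p,u). -/

import Mathlib

open Real Finset

/-- Conservative variables `W(p,u)` of the ultra-relativistic Euler equations. -/
noncomputable def consVars (d : ℕ) (p : ℝ) (u : Fin d → ℝ) : Fin (d + 1) → ℝ :=
  Fin.snoc (fun j => 4 * p * u j * Real.sqrt (1 + ∑ i, u i ^ 2))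
    (p * (3 + 4 * ∑ i, u i ^ 2))

/-- Entropy variables (main field) of the ultra-relativistic Euler equations. -/
noncomputable def entropyVars (d : ℕ) (p : ℝ) (u : Fin d → ℝ) : Fin (d + 1) → ℝ :=
  Fin.snoc (fun i => -(1 / 4) * u i * p ^ (-(1 / 4) : ℝ))
    ((1 / 4) * p ^ (-(1 / 4) : ℝ) * Real.sqrt (1 + ∑ j, u j ^ 2))

/-- Entropy `η(p,u) = p^{3/4} √(1+|u|²)`. -/
noncomputable def entropy (d : ℕ) (p : ℝ) (u : Fin d → ℝ) : ℝ :=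
  p ^ ((3 : ℝ) / 4) * Real.sqrt (1 + ∑ j, u j ^ 2)

/-! With `γ = √(1 + |u|²)` and `T = u · δu`, differentiation gives
`dη = ¾ p^{-1/4} γ δp + p^{3/4} T / γ`, while `Σ_α ω_α dW_α = ¼ p^{-1/4} (γ dW_{d+1} - Σ_j u_j dW_j)`.
Expanding the latter, everything cancels except `¾ p^{-1/4} γ δp + p^{3/4} T (γ² - |u|²) / γ`,
and `γ² - |u|² = 1`. -/

section
variable {d : ℕ}

noncomputable def lorentzFactor (u : Fin d → ℝ) : ℝ := √(1 + ∑ i, u i ^ 2)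

theorem lorentzFactor_sq (u : Fin d → ℝ) : lorentzFactor u ^ 2 = 1 + ∑ i, u i ^ 2 :=
  Real.sq_sqrt (by positivity)

theorem hasFDerivAt_sum_sq (u : Fin d → ℝ) :
    HasFDerivAt (fun u : Fin d → ℝ => ∑ i, u i ^ 2)
      (∑ i, (2 * u i) • (ContinuousLinearMap.proj i : (Fin d → ℝ) →L[ℝ] ℝ)) u := by
  refine HasFDerivAt.fun_sum fun i _ => ?_
  simpa using (hasFDerivAt_apply (𝕜 := ℝ) (F' := fun _ : Fin d => ℝ) i u).pow 2

theorem hasFDerivAt_lorentzFactor (u : Fin d → ℝ) :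
    HasFDerivAt lorentzFactor
      ((lorentzFactor u)⁻¹ • ∑ i, u i • (ContinuousLinearMap.proj i : (Fin d → ℝ) →L[ℝ] ℝ)) u := by
  have hpos : 1 + ∑ i, u i ^ 2 ≠ 0 := by positivity
  refine (((hasFDerivAt_sum_sq u).const_add 1).sqrt hpos).congr_fderiv ?_
  simp_rw [mul_smul, ← Finset.smul_sum, smul_smul]
  congr 1
  unfold lorentzFactor
  field_simp

theorem consVars_castSucc (p : ℝ) (u : Fin d → ℝ) (j : Fin d) :
    consVars d p u j.castSucc = 4 * p * u j * lorentzFactor u :=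
  Fin.snoc_castSucc ..

theorem consVars_last (p : ℝ) (u : Fin d → ℝ) :
    consVars d p u (Fin.last d) = p * (3 + 4 * ∑ i, u i ^ 2) :=
  Fin.snoc_last ..

theorem entropyVars_castSucc (p : ℝ) (u : Fin d → ℝ) (j : Fin d) :
    entropyVars d p u j.castSucc = -(1 / 4) * p ^ (-(1 / 4) : ℝ) * u j := by
  rw [entropyVars, Fin.snoc_castSucc]
  ring

theorem entropyVars_last (p : ℝ) (u : Fin d → ℝ) :
    entropyVars d p u (Fin.last d) = 1 / 4 * p ^ (-(1 / 4) : ℝ) * lorentzFactor u :=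
  Fin.snoc_last ..

variable (p : ℝ) (u : Fin d → ℝ) (v : ℝ × (Fin d → ℝ))

theorem fderiv_entropy_apply (hp : 0 < p) :
    fderiv ℝ (fun x : ℝ × (Fin d → ℝ) => entropy d x.1 x.2) (p, u) v =
      3 / 4 * p ^ (-(1 / 4) : ℝ) * lorentzFactor u * v.1
        + p ^ ((3 : ℝ) / 4) * (∑ i, u i * v.2 i) / lorentzFactor u := by
  have h := (hasFDerivAt_fst (p := (p, u)).rpow_const (p := (3 : ℝ) / 4) (Or.inl hp.ne')).fun_mul
      ((hasFDerivAt_lorentzFactor u).comp (p, u) (hasFDerivAt_snd (𝕜 := ℝ)))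
  have h' : HasFDerivAt (fun x : ℝ × (Fin d → ℝ) => entropy d x.1 x.2) _ (p, u) := h
  rw [h'.fderiv]
  simp only [add_apply, smul_apply,
    ContinuousLinearMap.comp_apply, ContinuousLinearMap.coe_fst', ContinuousLinearMap.coe_snd',
    _root_.sum_apply, ContinuousLinearMap.proj_apply, Function.comp_apply, smul_eq_mul]
  rw [show (3 : ℝ) / 4 - 1 = -(1 / 4) by norm_num]
  ring

theorem fderiv_consVars_castSucc_apply (j : Fin d) :
    fderiv ℝ (fun x : ℝ × (Fin d → ℝ) => consVars d x.1 x.2 j.castSucc) (p, u) v =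
      4 * v.1 * u j * lorentzFactor u + 4 * p * v.2 j * lorentzFactor u
        + 4 * p * u j * (∑ i, u i * v.2 i) / lorentzFactor u := by
  have h := ((hasFDerivAt_fst (𝕜 := ℝ) (p := (p, u)) |>.const_mul (4 : ℝ)).fun_mul
        ((hasFDerivAt_apply j u).comp (p, u) (hasFDerivAt_snd (𝕜 := ℝ)))).fun_mul
        ((hasFDerivAt_lorentzFactor u).comp (p, u) (hasFDerivAt_snd (𝕜 := ℝ)))
  have h' : HasFDerivAt (fun x : ℝ × (Fin d → ℝ) => 4 * x.1 * x.2 j * lorentzFactor x.2) _ (p, u) := h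
  simp only [consVars_castSucc]
  rw [h'.fderiv]
  simp only [add_apply, smul_apply,
    ContinuousLinearMap.comp_apply, ContinuousLinearMap.coe_fst', ContinuousLinearMap.coe_snd',
    _root_.sum_apply, ContinuousLinearMap.proj_apply, Function.comp_apply, smul_eq_mul]
  ring

theorem fderiv_consVars_last_apply :
    fderiv ℝ (fun x : ℝ × (Fin d → ℝ) => consVars d x.1 x.2 (Fin.last d)) (p, u) v =
      v.1 * (3 + 4 * ∑ i, u i ^ 2) + 8 * p * ∑ i, u i * v.2 i := by
  have h := (hasFDerivAt_fst (𝕜 := ℝ) (p := (p, u))).fun_mul ((((hasFDerivAt_sum_sq u).comp (p, u)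
        (hasFDerivAt_snd (𝕜 := ℝ))).const_mul (4 : ℝ)).const_add 3)
  have h' : HasFDerivAt (fun x : ℝ × (Fin d → ℝ) => x.1 * (3 + 4 * ∑ i, x.2 i ^ 2)) _ (p, u) := h
  simp only [consVars_last]
  rw [h'.fderiv]
  simp only [add_apply, smul_apply,
    ContinuousLinearMap.comp_apply, ContinuousLinearMap.coe_fst', ContinuousLinearMap.coe_snd',
    _root_.sum_apply, ContinuousLinearMap.proj_apply, Function.comp_apply, smul_eq_mul]
  simp only [mul_assoc, ← Finset.mul_sum]
  ring

theorem sum_mul_fderiv_consVars_castSucc_apply :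
    ∑ j, u j * fderiv ℝ (fun x : ℝ × (Fin d → ℝ) => consVars d x.1 x.2 j.castSucc) (p, u) v =
      4 * (v.1 * lorentzFactor u + p * (∑ i, u i * v.2 i) / lorentzFactor u) * ∑ j, u j ^ 2
        + 4 * p * lorentzFactor u * ∑ j, u j * v.2 j := by
  calc _ = ∑ j, (4 * (v.1 * lorentzFactor u + p * (∑ i, u i * v.2 i) / lorentzFactor u) * u j ^ 2
        + 4 * p * lorentzFactor u * (u j * v.2 j)) :=
        sum_congr rfl fun j _ => by rw [fderiv_consVars_castSucc_apply]; ring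
    _ = _ := by rw [sum_add_distrib, ← mul_sum, ← mul_sum]

end

theorem entropyVars_gradient_general (d : ℕ)
    (p : ℝ) (hp : 0 < p) (u : Fin d → ℝ) :
    fderiv ℝ (fun x : ℝ × (Fin d → ℝ) => entropy d x.1 x.2) (p, u) =
      ∑ α : Fin (d + 1), entropyVars d p u α •
        fderiv ℝ (fun x : ℝ × (Fin d → ℝ) => consVars d x.1 x.2 α) (p, u) := by
  refine ContinuousLinearMap.ext fun v => ?_
  have hpow : p ^ ((3 : ℝ) / 4) = p * p ^ (-(1 / 4) : ℝ) := by
    rw [← Real.rpow_one_add' hp.le (by norm_num)]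
    norm_num
  have hsq : ∑ i, u i ^ 2 = lorentzFactor u ^ 2 - 1 := by rw [lorentzFactor_sq]; ring
  simp only [Fin.sum_univ_castSucc, add_apply, _root_.sum_apply, smul_apply, smul_eq_mul,
    entropyVars_castSucc, entropyVars_last, mul_assoc, ← mul_sum]
  rw [fderiv_entropy_apply p u v hp, sum_mul_fderiv_consVars_castSucc_apply,
    fderiv_consVars_last_apply, hpow, hsq]
  field_simp
  ring

/-- The entropy variables are the gradient of the entropy with respect to the
conservative variables, in chain-rule form with respect to the primitive
variables `(p,u)`: `D η = Σ_α ω_α D W_α` at every state with `p > 0`. -/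
theorem entropyVars_gradient (d : ℕ) (hd : 1 ≤ d)
    (p : ℝ) (hp : 0 < p) (u : Fin d → ℝ) :
    fderiv ℝ (fun x : ℝ × (Fin d → ℝ) => entropy d x.1 x.2) (p, u) =
      ∑ α : Fin (d + 1), entropyVars d p u α •
        fderiv ℝ (fun x : ℝ × (Fin d → ℝ) => consVars d x.1 x.2 α) (p, u) :=
  entropyVars_gradient_general d p hp u
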